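/- arXiv:2501.08661 — 4 statements merged into one kernel-verified Lean document; each statement's English description precedes it below -/
import Mathlib

section
/- Let c > 0, m > 0, δ > 0, and let w_k = w_0 + kδ for integers k ≥ 0, with w_0 > 0. Then Σ_{k=0}^∞ w_k^{-m} e^{-c w_k²} = (e^{-c w_0²} / (2cδ w_0^{m+1})) (1 + O(w_0^{-2} + w_0 δ)) as w_0 → ∞ and δ → 0 with w_0 δ → 0. -/
set_option maxHeartbeats 1000000

lemma aux_exp_le (a : ℝ) (h0 : 0 ≤ a) (h1 : a ≤ 1) : Real.exp (-a) ≤ 1 - a/2 := by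
  have h := Real.add_one_le_exp a
  have hE : Real.exp (-a) * Real.exp a = 1 := by rw [← Real.exp_add]; simp
  have hpos := Real.exp_pos (-a)
  nlinarith [mul_le_mul_of_nonneg_left h hpos.le]

lemma aux_bernoulli (m u v : ℝ) (hm : 0 < m) (hu : 0 ≤ u) (hv : 0 ≤ v) :
    1 - m*u - v ≤ (1+u) ^ (-m) * Real.exp (-v) := by
  rcases le_or_gt (1 - m*u) 0 with h | h
  · have h1 : (0:ℝ) ≤ (1+u) ^ (-m) * Real.exp (-v) := by positivity
    linarith
  · have hlog : Real.log (1+u) ≤ u := by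
      have := Real.log_le_sub_one_of_pos (by linarith : (0:ℝ) < 1+u); linarith
    have hlognn : 0 ≤ Real.log (1+u) := Real.log_nonneg (by linarith)
    have h1 : 1 - m*u ≤ (1+u) ^ (-m) := by
      rw [Real.rpow_def_of_pos (by linarith : (0:ℝ) < 1+u)]
      have h2 := Real.add_one_le_exp (Real.log (1+u) * -m)
      nlinarith [mul_le_mul_of_nonneg_left hlog hm.le]
    have h2 : 1 - v ≤ Real.exp (-v) := by
      have := Real.add_one_le_exp (-v); linarith
    have hp : (0:ℝ) ≤ (1+u) ^ (-m) := Real.rpow_nonneg (by linarith) _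
    nlinarith [mul_le_mul_of_nonneg_left h2 h.le,
      mul_le_mul_of_nonneg_right h1 (Real.exp_pos (-v)).le,
      mul_nonneg (mul_nonneg hm.le hu) hv]

theorem stmt_7 (c m : ℝ) (hc : 0 < c) (hm : 0 < m) :
    ∃ C > 0, ∃ ε > 0, ∀ w₀ δ : ℝ, 0 < δ → 1 / ε ≤ w₀ → δ ≤ ε → w₀ * δ ≤ ε →
      |(∑' k : ℕ, (w₀ + k * δ) ^ (-m) * Real.exp (-c * (w₀ + k * δ) ^ 2)) *
          (2 * c * δ * w₀ ^ (m + 1) * Real.exp (c * w₀ ^ 2)) - 1|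
        ≤ C * (w₀ ^ (-(2 : ℝ)) + w₀ * δ) := by
  refine ⟨2*c + 2*m/c + 8/c, by positivity, min 1 (1/(2*c)), by positivity, ?_⟩
  intro w₀ δ hδ hw₀ hδε hwδ
  set ε := min 1 (1/(2*c)) with hεdef
  have hε1 : ε ≤ 1 := min_le_left _ _
  have hεpos : 0 < ε := by positivity
  have hw1 : 1 ≤ w₀ := le_trans (by rw [le_div_iff₀ hεpos]; nlinarith) hw₀
  have hw0 : 0 < w₀ := by linarith
  set a := 2*c*w₀*δ with hadef
  have ha : 0 < a := by positivity
  have ha1 : a ≤ 1 := by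
    have h2 : w₀ * δ ≤ 1/(2*c) := le_trans hwδ (min_le_right _ _)
    rw [hadef]
    calc 2*c*w₀*δ = 2*c*(w₀*δ) := by ring
      _ ≤ 2*c*(1/(2*c)) := by nlinarith
      _ = 1 := by field_simp
  -- geometric setup
  set x := Real.exp (-a) with hxdef
  have hx0 : 0 < x := Real.exp_pos _
  have hx1 : x < 1 := Real.exp_lt_one_iff.mpr (by linarith)
  have hxn : ‖x‖ < 1 := by rwa [Real.norm_eq_abs, abs_of_pos hx0]
  set y := Real.exp (-(a/2)) with hydef
  have hy0 : 0 < y := Real.exp_pos _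
  have hy1 : y < 1 := Real.exp_lt_one_iff.mpr (by linarith)
  have hyn : ‖y‖ < 1 := by rwa [Real.norm_eq_abs, abs_of_pos hy0]
  have hs0 : Summable (fun k : ℕ => x ^ k) := summable_geometric_of_lt_one hx0.le hx1
  have hs1 : Summable (fun k : ℕ => (k:ℝ) * x ^ k) := by
    simpa using summable_pow_mul_geometric_of_norm_lt_one 1 hxn
  have hs2 : Summable (fun k : ℕ => (k:ℝ)^2 * x ^ k) := by
    simpa using summable_pow_mul_geometric_of_norm_lt_one 2 hxn
  have hs1y : Summable (fun k : ℕ => (k:ℝ) * y ^ k) := by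
    simpa using summable_pow_mul_geometric_of_norm_lt_one 1 hyn
  have t0 : ∑' k : ℕ, x ^ k = (1-x)⁻¹ := tsum_geometric_of_lt_one hx0.le hx1
  have t1 : ∑' k : ℕ, (k:ℝ) * x ^ k = x / (1-x)^2 := tsum_coe_mul_geometric_of_norm_lt_one hxn
  have t1y : ∑' k : ℕ, (k:ℝ) * y ^ k = y / (1-y)^2 := tsum_coe_mul_geometric_of_norm_lt_one hyn
  have h1x : a/2 ≤ 1 - x := by
    have := aux_exp_le a ha.le ha1; rw [hxdef]; linarith
  have h1xpos : 0 < 1 - x := lt_of_lt_of_le (by linarith) h1x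
  have h1y : a/4 ≤ 1 - y := by
    have := aux_exp_le (a/2) (by linarith) (by linarith); rw [hydef]; linarith
  -- bound on S₂
  have hterm2 : ∀ k : ℕ, (k:ℝ)^2 * x ^ k ≤ (2/a) * ((k:ℝ) * y ^ k) := by
    intro k
    have hk : (0:ℝ) ≤ (k:ℝ) := Nat.cast_nonneg k
    have hxy : x ^ k = y ^ k * y ^ k := by
      rw [hxdef, hydef, ← mul_pow, ← Real.exp_add]; ring_nf
    have hky : (k:ℝ) * y ^ k ≤ 2/a := by
      have h1 : y ^ k = Real.exp (-(a/2*k)) := by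
        rw [hydef, ← Real.exp_nat_mul]; ring_nf
      have h2 : (a/2*k) * Real.exp (-(a/2*k)) ≤ 1 := by
        have h3 := Real.add_one_le_exp (a/2*(k:ℝ))
        have h4 : Real.exp (-(a/2*k)) * Real.exp (a/2*k) = 1 := by
          rw [← Real.exp_add]; simp
        nlinarith [Real.exp_pos (-(a/2*(k:ℝ))), Real.exp_pos (a/2*(k:ℝ))]
      have heq : (k:ℝ) * Real.exp (-(a/2*k)) = (2/a) * ((a/2*k) * Real.exp (-(a/2*k))) := by
        field_simp
      rw [h1, heq]
      calc (2/a) * ((a/2*k) * Real.exp (-(a/2*k))) ≤ (2/a) * 1 :=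
            mul_le_mul_of_nonneg_left h2 (by positivity)
        _ = 2/a := mul_one _
    calc (k:ℝ)^2 * x ^ k = ((k:ℝ) * y ^ k) * ((k:ℝ) * y ^ k) := by rw [hxy]; ring
      _ ≤ (2/a) * ((k:ℝ) * y ^ k) :=
        mul_le_mul_of_nonneg_right hky (by positivity)
  have hS2 : ∑' k : ℕ, (k:ℝ)^2 * x ^ k ≤ 32 / a^3 := by
    calc ∑' k : ℕ, (k:ℝ)^2 * x ^ k ≤ ∑' k : ℕ, (2/a) * ((k:ℝ) * y ^ k) :=
          Summable.tsum_le_tsum hterm2 hs2 (hs1y.mul_left _)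
      _ = (2/a) * (y / (1-y)^2) := by rw [tsum_mul_left, t1y]
      _ ≤ 32 / a^3 := by
          have hy2 : y/(1-y)^2 ≤ 16/a^2 := by
            rw [div_le_div_iff₀ (pow_pos (by linarith) 2) (by positivity)]
            nlinarith [mul_le_mul h1y h1y (by positivity : (0:ℝ) ≤ a/4) (by linarith : (0:ℝ) ≤ 1-y)]
          calc (2/a) * (y / (1-y)^2) ≤ (2/a) * (16/a^2) :=
                mul_le_mul_of_nonneg_left hy2 (by positivity)
            _ = 32 / a^3 := by field_simp; ring
  -- per-term bounds
  set A := w₀ ^ (-m) * Real.exp (-(c*w₀^2)) with hAdef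
  have hA : 0 < A := by positivity
  have hub : ∀ k : ℕ, (w₀ + k * δ) ^ (-m) * Real.exp (-c * (w₀ + k * δ) ^ 2) ≤ A * x ^ k := by
    intro k
    have hk : (0:ℝ) ≤ (k:ℝ) := Nat.cast_nonneg k
    have hwk : 0 < w₀ + k*δ := by positivity
    have s1 : (w₀ + k*δ) ^ (-m) ≤ w₀ ^ (-m) :=
      Real.rpow_le_rpow_of_nonpos hw0 (le_add_of_nonneg_right (by positivity)) (by linarith)
    have s2 : Real.exp (-c * (w₀ + k*δ)^2) ≤ Real.exp (-(c*w₀^2)) * x ^ k := by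
      rw [hxdef, ← Real.exp_nat_mul, ← Real.exp_add, Real.exp_le_exp, hadef]
      nlinarith [sq_nonneg ((k:ℝ)*δ)]
    calc (w₀ + k * δ) ^ (-m) * Real.exp (-c * (w₀ + k * δ) ^ 2)
        ≤ w₀ ^ (-m) * (Real.exp (-(c*w₀^2)) * x ^ k) :=
          mul_le_mul s1 s2 (Real.exp_pos _).le (Real.rpow_nonneg hw0.le _)
      _ = A * x ^ k := by rw [hAdef]; ring
  have hlb : ∀ k : ℕ,
      A * x ^ k - (A*m*δ/w₀) * ((k:ℝ) * x ^ k) - (A*c*δ^2) * ((k:ℝ)^2 * x ^ k)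
        ≤ (w₀ + k * δ) ^ (-m) * Real.exp (-c * (w₀ + k * δ) ^ 2) := by
    intro k
    have hk : (0:ℝ) ≤ (k:ℝ) := Nat.cast_nonneg k
    set u := (k:ℝ)*δ/w₀ with hudef
    have hu : 0 ≤ u := by positivity
    have e1 : (w₀ + k*δ) ^ (-m) = w₀ ^ (-m) * (1+u) ^ (-m) := by
      rw [← Real.mul_rpow hw0.le (by linarith)]
      congr 1
      rw [hudef]
      field_simp
    have e2 : Real.exp (-c * (w₀ + k*δ)^2)
        = Real.exp (-(c*w₀^2)) * x ^ k * Real.exp (-(c*((k:ℝ)*δ)^2)) := by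
      rw [hxdef, ← Real.exp_nat_mul, ← Real.exp_add, ← Real.exp_add, Real.exp_eq_exp, hadef]
      ring
    have key : 1 - m*u - c*((k:ℝ)*δ)^2 ≤ (1+u) ^ (-m) * Real.exp (-(c*((k:ℝ)*δ)^2)) :=
      aux_bernoulli m u (c*((k:ℝ)*δ)^2) hm hu (by positivity)
    have hmul := mul_le_mul_of_nonneg_left key (by positivity : (0:ℝ) ≤ A * x ^ k)
    calc A * x ^ k - (A*m*δ/w₀) * ((k:ℝ) * x ^ k) - (A*c*δ^2) * ((k:ℝ)^2 * x ^ k)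
        = A * x ^ k * (1 - m*u - c*((k:ℝ)*δ)^2) := by
          rw [hudef]; field_simp
      _ ≤ A * x ^ k * ((1+u) ^ (-m) * Real.exp (-(c*((k:ℝ)*δ)^2))) := hmul
      _ = (w₀ + k * δ) ^ (-m) * Real.exp (-c * (w₀ + k * δ) ^ 2) := by
          rw [e1, e2, hAdef]; ring
  -- summability of the series
  have hS : Summable (fun k : ℕ => (w₀ + k * δ) ^ (-m) * Real.exp (-c * (w₀ + k * δ) ^ 2)) := by
    apply Summable.of_nonneg_of_le (fun k => ?_) hub (hs0.mul_left A)
    have hwk : 0 < w₀ + k*δ := by positivity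
    positivity
  set S := ∑' k : ℕ, (w₀ + k * δ) ^ (-m) * Real.exp (-c * (w₀ + k * δ) ^ 2) with hSdef
  set K := 2 * c * δ * w₀ ^ (m + 1) * Real.exp (c * w₀ ^ 2) with hKdef
  have hK : 0 < K := by positivity
  have hKA : A * K = a := by
    have e3 : w₀ ^ (-m) * w₀ ^ (m+1) = w₀ := by
      rw [← Real.rpow_add hw0, show -m + (m+1) = 1 by ring, Real.rpow_one]
    have e4 : Real.exp (-(c*w₀^2)) * Real.exp (c*w₀^2) = 1 := by
      rw [← Real.exp_add]; simp
    calc A * K = 2*c*δ * (w₀ ^ (-m) * w₀ ^ (m+1)) * (Real.exp (-(c*w₀^2)) * Real.exp (c*w₀^2)) := by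
          rw [hAdef, hKdef]; ring
      _ = a := by rw [e3, e4, hadef]; ring
  -- upper bound
  have hxa : x * (1+a) ≤ 1 := by
    have h5 : x * Real.exp a = 1 := by rw [hxdef, ← Real.exp_add]; simp
    nlinarith [mul_le_mul_of_nonneg_left (Real.add_one_le_exp a) hx0.le]
  have hU : S * K ≤ 1 + a := by
    have hSu : S ≤ A * (1-x)⁻¹ := by
      calc S ≤ ∑' k : ℕ, A * x ^ k := Summable.tsum_le_tsum hub hS (hs0.mul_left A)
        _ = A * (1-x)⁻¹ := by rw [tsum_mul_left, t0]
    calc S * K ≤ (A * (1-x)⁻¹) * K := mul_le_mul_of_nonneg_right hSu hK.le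
      _ = a * (1-x)⁻¹ := by rw [← hKA]; ring
      _ ≤ 1 + a := by
          rw [← div_eq_mul_inv, div_le_iff₀ h1xpos]
          linarith
  -- lower bound
  have hf1 : Summable (fun k : ℕ => A * x ^ k) := hs0.mul_left A
  have hf2 : Summable (fun k : ℕ => (A*m*δ/w₀) * ((k:ℝ) * x ^ k)) := hs1.mul_left _
  have hf3 : Summable (fun k : ℕ => (A*c*δ^2) * ((k:ℝ)^2 * x ^ k)) := hs2.mul_left _
  set S₂ := ∑' k : ℕ, (k:ℝ)^2 * x ^ k with hS2def
  have e5 : ∑' k : ℕ, (A * x ^ k - (A*m*δ/w₀) * ((k:ℝ) * x ^ k) - (A*c*δ^2) * ((k:ℝ)^2 * x ^ k))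
      = A * (1-x)⁻¹ - (A*m*δ/w₀) * (x/(1-x)^2) - (A*c*δ^2) * S₂ := by
    rw [Summable.tsum_sub (hf1.sub hf2) hf3, Summable.tsum_sub hf1 hf2, tsum_mul_left, tsum_mul_left,
      tsum_mul_left, t0, t1]
  have hSl : A * (1-x)⁻¹ - (A*m*δ/w₀) * (x/(1-x)^2) - (A*c*δ^2) * S₂ ≤ S := by
    rw [← e5]
    exact Summable.tsum_le_tsum hlb ((hf1.sub hf2).sub hf3) hS
  have h_one : 1 ≤ a * (1-x)⁻¹ := by
    have h6 : 1 - x ≤ a := by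
      have := Real.add_one_le_exp (-a); rw [hxdef]; linarith
    calc (1:ℝ) = (1-x) * (1-x)⁻¹ := (mul_inv_cancel₀ (ne_of_gt h1xpos)).symm
      _ ≤ a * (1-x)⁻¹ := mul_le_mul_of_nonneg_right h6 (by positivity)
  have hfrac : x/(1-x)^2 ≤ 4/a^2 := by
    rw [div_le_div_iff₀ (pow_pos h1xpos 2) (by positivity)]
    nlinarith [mul_le_mul h1x h1x (by positivity : (0:ℝ) ≤ a/2) (le_of_lt h1xpos)]
  have h_T1 : (a*m*δ/w₀) * (x/(1-x)^2) ≤ 2*m/(c*w₀^2) := by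
    calc (a*m*δ/w₀) * (x/(1-x)^2) ≤ (a*m*δ/w₀) * (4/a^2) :=
          mul_le_mul_of_nonneg_left hfrac (by positivity)
      _ = 2*m/(c*w₀^2) := by rw [hadef]; field_simp; ring
  have h_T2 : (a*c*δ^2) * S₂ ≤ 8/(c*w₀^2) := by
    calc (a*c*δ^2) * S₂ ≤ (a*c*δ^2) * (32/a^3) :=
          mul_le_mul_of_nonneg_left hS2 (by positivity)
      _ = 8/(c*w₀^2) := by rw [hadef]; field_simp; ring
  have hL : 1 - 2*m/(c*w₀^2) - 8/(c*w₀^2) ≤ S * K := by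
    have h7 : (A * (1-x)⁻¹ - (A*m*δ/w₀) * (x/(1-x)^2) - (A*c*δ^2) * S₂) * K
        = a * (1-x)⁻¹ - (a*m*δ/w₀) * (x/(1-x)^2) - (a*c*δ^2) * S₂ := by
      rw [← hKA]; ring
    have h8 := mul_le_mul_of_nonneg_right hSl hK.le
    rw [h7] at h8
    linarith
  -- conclusion
  have hw2 : w₀ ^ (-(2:ℝ)) = (w₀^2)⁻¹ := by
    rw [Real.rpow_neg hw0.le, show ((2:ℝ)) = ((2:ℕ):ℝ) by norm_num, Real.rpow_natCast]
  rw [hw2, abs_le]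
  have hinv : 0 < (w₀^2)⁻¹ := by positivity
  have hwd : 0 < w₀*δ := by positivity
  have hdiveq : 2*m/(c*w₀^2) + 8/(c*w₀^2) = (2*m/c + 8/c) * (w₀^2)⁻¹ := by
    field_simp
  have h₁ : 0 ≤ (2*m/c + 8/c) * (w₀*δ) := by positivity
  have h₂ : 0 ≤ (2*c + 2*m/c + 8/c) * ((w₀^2)⁻¹) := by positivity
  have h₃ : 0 ≤ 2*c * ((w₀^2)⁻¹) := by positivity
  have h₄ : 0 ≤ (2*c + 2*m/c + 8/c) * (w₀*δ) := by positivity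
  constructor
  · have hU' : S*K - 1 ≤ 2*c*(w₀*δ) := by rw [hadef] at hU; linarith
    linarith
  · have hL' : 1 - (2*m/c + 8/c) * (w₀^2)⁻¹ ≤ S*K := by rw [← hdiveq]; linarith
    linarith
end

section
/- Fix L > 2 and let g(x) = e^{-x} + x - 2 log(L - x) on (-∞, L) with minimum value g(x₀). Then 1 - 2/L - 2 log(L + 2/L) < g(x₀) < 1 - 2 log L. Consequently, sup_{x < L} e^{-e^{-x}-x}(L-x)² = e^{-g(x₀)} = e^{-1} L² (1 + o(1)) as L → ∞. -/
open Filter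

-- log y - log z ≤ y/z - 1
lemma aux_log {y z : ℝ} (hy : 0 < y) (hz : 0 < z) :
    Real.log y - Real.log z ≤ y / z - 1 := by
  have := Real.log_le_sub_one_of_pos (show (0:ℝ) < y / z from div_pos hy hz)
  rwa [Real.log_div hy.ne' hz.ne'] at this

-- key1: universal lower bound
lemma aux_key1 {L x : ℝ} (hL : 2 < L) (hx : x < L) :
    1 - 2 / L - 2 * Real.log (L + 2 / L) < Real.exp (-x) + x - 2 * Real.log (L - x) := by
  have hL0 : (0:ℝ) < L := by linarith
  have h2L : (0:ℝ) < 2 / L := by positivity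
  have hA : (0:ℝ) < L + 2 / L := by linarith
  have hLx : (0:ℝ) < L - x := by linarith
  rcases le_or_gt (-(2/L)) x with h | h
  · have h1 : 1 ≤ Real.exp (-x) + x := by
      have := Real.add_one_le_exp (-x); linarith
    have h2 : Real.log (L - x) ≤ Real.log (L + 2 / L) :=
      Real.log_le_log hLx (by linarith)
    linarith
  · have hx0 : x < 0 := by nlinarith
    have hexp : (1 - x / 2) ^ 2 ≤ Real.exp (-x) := by
      have h1 := Real.add_one_le_exp (-x / 2)
      have h2 : Real.exp (-x) = Real.exp (-x / 2) ^ 2 := by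
        rw [sq, ← Real.exp_add]; ring_nf
      nlinarith [Real.exp_pos (-x / 2)]
    have hlog : Real.log (L - x) - Real.log (L + 2 / L) ≤ (L - x) / (L + 2 / L) - 1 :=
      aux_log hLx hA
    have h3 : (L - x) / (L + 2 / L) - 1 ≤ (-x - 2 / L) / L := by
      rw [div_sub_one hA.ne', div_le_div_iff₀ hA hL0]
      nlinarith
    have h4 : (0:ℝ) < x^2/4 + 2*(x/L) + 2/L + 4*(1/L)^2 := by
      have hsq := sq_nonneg (x/2 + 2/L)
      have hexpand : (x/2 + 2/L)^2 = x^2/4 + 2*(x/L) + 4*(1/L)^2 := by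
        field_simp; ring
      linarith
    have h5 : (-x - 2/L)/L = -(x/L) - 2*(1/L)^2 := by
      field_simp
    have h6 : 2 * Real.log (L - x) ≤ 2 * Real.log (L + 2/L) + 2*(-(x/L) - 2*(1/L)^2) := by
      rw [← h5]; linarith
    have hexp' : 1 - x + x^2/4 ≤ Real.exp (-x) := by nlinarith [hexp]
    linarith

lemma aux_key2 {L : ℝ} (hL : 2 < L) :
    Real.exp (-(-(1/(2*L)))) + (-(1/(2*L))) - 2 * Real.log (L - (-(1/(2*L)))) <
      1 - 2 * Real.log L := by
  have hL0 : (0:ℝ) < L := by linarith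
  set s : ℝ := 1/(2*L) with hs
  have hs0 : 0 < s := by positivity
  have hs4 : s < 1/4 := by
    rw [hs, div_lt_div_iff₀ (by linarith) (by norm_num)]; linarith
  have hexp : Real.exp s < 1/(1-s) := by
    have h1 : 1 - s < Real.exp (-s) := by
      have := Real.add_one_lt_exp (show (-s) ≠ 0 by simp [hs0.ne']); linarith
    rw [show Real.exp s = 1/Real.exp (-s) by rw [Real.exp_neg]; field_simp]
    exact one_div_lt_one_div_of_lt (by linarith) h1
  have hLs : (0:ℝ) < L + s := by linarith
  have hlog : 4*s^2/(1+2*s^2) ≤ 2*(Real.log (L+s) - Real.log L) := by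
    have hpos : (0:ℝ) < L/(L+s) := by positivity
    have h := Real.log_le_sub_one_of_pos hpos
    rw [Real.log_div hL0.ne' hLs.ne'] at h
    have he : 2*(L/(L+s) - 1) = -(4*s^2/(1+2*s^2)) := by
      rw [hs]; field_simp; ring
    linarith
  have h1 : 1/(1-s) ≤ 1 + s + (4/3)*s^2 := by
    rw [div_le_iff₀ (by linarith)]; nlinarith
  have h2 : (4/3)*s^2 < 4*s^2/(1+2*s^2) := by
    rw [lt_div_iff₀ (by positivity)]
    have hs1 : s^2 < 1 := by nlinarith
    nlinarith [mul_pos hs0 hs0, hs1]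
  simp only [neg_neg, sub_neg_eq_add]
  linarith

lemma aux_exp {L x : ℝ} (h : x < L) :
    Real.exp (-(Real.exp (-x) + x - 2 * Real.log (L - x)))
      = Real.exp (-Real.exp (-x) - x) * (L - x) ^ 2 := by
  have h0 : (0:ℝ) < L - x := by linarith
  rw [show -(Real.exp (-x) + x - 2 * Real.log (L - x))
      = (-Real.exp (-x) - x) + (Real.log (L - x) + Real.log (L - x)) by ring,
    Real.exp_add, Real.exp_add, Real.exp_log h0]
  ring

lemma aux_bdd {L : ℝ} (hL : 2 < L) : ∀ x ∈ Set.Iio L,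
    Real.exp (-Real.exp (-x) - x) * (L - x) ^ 2
      ≤ Real.exp (-(1 - 2 / L - 2 * Real.log (L + 2 / L))) := by
  intro x hx
  rw [← aux_exp hx]
  exact Real.exp_le_exp.mpr (by linarith [aux_key1 hL hx])

lemma aux_part1 (L : ℝ) (hL : 2 < L) (x₀ : ℝ) (hx₀ : x₀ < L)
    (hmin : IsMinOn (fun x => Real.exp (-x) + x - 2 * Real.log (L - x)) (Set.Iio L) x₀) :
    (1 - 2 / L - 2 * Real.log (L + 2 / L)
        < Real.exp (-x₀) + x₀ - 2 * Real.log (L - x₀) ∧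
      Real.exp (-x₀) + x₀ - 2 * Real.log (L - x₀) < 1 - 2 * Real.log L) ∧
    (⨆ x : Set.Iio L, Real.exp (-Real.exp (-x.1) - x.1) * (L - x.1) ^ 2)
      = Real.exp (-(Real.exp (-x₀) + x₀ - 2 * Real.log (L - x₀))) := by
  have hL0 : (0:ℝ) < L := by linarith
  have hmem : -(1/(2*L)) ∈ Set.Iio L := by
    have : (0:ℝ) < 1/(2*L) := by positivity
    exact Set.mem_Iio.mpr (by linarith)
  have hup := isMinOn_iff.mp hmin _ hmem
  refine ⟨⟨aux_key1 hL hx₀, lt_of_le_of_lt hup (aux_key2 hL)⟩, ?_⟩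
  haveI : Nonempty (Set.Iio L) := ⟨⟨x₀, hx₀⟩⟩
  apply le_antisymm
  · apply ciSup_le
    rintro ⟨x, hx⟩
    simp only [← aux_exp (show x < L from hx), ← aux_exp hx₀]
    exact Real.exp_le_exp.mpr (neg_le_neg (isMinOn_iff.mp hmin _ hx))
  · have hbdd : BddAbove (Set.range fun x : Set.Iio L =>
        Real.exp (-Real.exp (-x.1) - x.1) * (L - x.1) ^ 2) := by
      refine ⟨Real.exp (-(1 - 2 / L - 2 * Real.log (L + 2 / L))), ?_⟩
      rintro y ⟨⟨x, hx⟩, rfl⟩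
      exact aux_bdd hL x hx
    have h := le_ciSup hbdd (⟨x₀, hx₀⟩ : Set.Iio L)
    rwa [aux_exp hx₀]

lemma aux_Meq {L : ℝ} (hL : 2 < L) :
    Real.exp (-(1 - 2/L - 2 * Real.log (L + 2/L))) / L ^ 2
      = Real.exp (-1 + 2/L) * (1 + 2/L^2)^2 := by
  have hL0 : (0:ℝ) < L := by linarith
  have hA : (0:ℝ) < L + 2/L := by positivity
  rw [show -(1 - 2/L - 2 * Real.log (L + 2/L))
      = (-1 + 2/L) + (Real.log (L + 2/L) + Real.log (L + 2/L)) by ring,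
    Real.exp_add, Real.exp_add, Real.exp_add, Real.exp_log hA]
  field_simp


lemma aux_tendsto :
    Tendsto (fun L : ℝ =>
        (⨆ x : Set.Iio L, Real.exp (-Real.exp (-x.1) - x.1) * (L - x.1) ^ 2) / L ^ 2)
      atTop (nhds (Real.exp (-1))) := by
  have h1 : Tendsto (fun L : ℝ => -1 + 2/L) atTop (nhds (-1)) := by
    have := (tendsto_const_nhds (x := (2:ℝ)) (f := atTop)).div_atTop tendsto_id
    simpa using (tendsto_const_nhds (x := (-1:ℝ)) (f := atTop)).add this
  have h2 : Tendsto (fun L : ℝ => (1 + 2/L^2)^2) atTop (nhds 1) := by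
    have hp : Tendsto (fun L : ℝ => L^2) atTop atTop := tendsto_pow_atTop two_ne_zero
    have := (tendsto_const_nhds (x := (2:ℝ)) (f := atTop)).div_atTop hp
    have := ((tendsto_const_nhds (x := (1:ℝ)) (f := atTop)).add this).pow 2
    simpa using this
  have hM : Tendsto (fun L : ℝ => Real.exp (-1 + 2/L) * (1 + 2/L^2)^2)
      atTop (nhds (Real.exp (-1))) := by
    have := (((Real.continuous_exp.tendsto (-1)).comp h1).mul h2)
    simpa [Function.comp] using this
  have hM' : Tendsto (fun L : ℝ =>
      Real.exp (-(1 - 2/L - 2 * Real.log (L + 2/L))) / L ^ 2)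
      atTop (nhds (Real.exp (-1))) := by
    apply hM.congr'
    filter_upwards [eventually_gt_atTop 2] with L hL
    exact (aux_Meq hL).symm
  apply tendsto_of_tendsto_of_tendsto_of_le_of_le' tendsto_const_nhds hM'
  · filter_upwards [eventually_gt_atTop 2] with L hL
    have hL0 : (0:ℝ) < L := by linarith
    haveI : Nonempty (Set.Iio L) := ⟨⟨0, by simpa using hL0⟩⟩
    have hbdd : BddAbove (Set.range fun x : Set.Iio L =>
        Real.exp (-Real.exp (-x.1) - x.1) * (L - x.1) ^ 2) := by
      refine ⟨Real.exp (-(1 - 2 / L - 2 * Real.log (L + 2 / L))), ?_⟩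
      rintro y ⟨⟨x, hx⟩, rfl⟩
      exact aux_bdd hL x hx
    have h0 := le_ciSup hbdd (⟨0, by simpa using hL0⟩ : Set.Iio L)
    rw [le_div_iff₀ (by positivity : (0:ℝ) < L^2)]
    simpa using h0
  · filter_upwards [eventually_gt_atTop 2] with L hL
    have hL0 : (0:ℝ) < L := by linarith
    haveI : Nonempty (Set.Iio L) := ⟨⟨0, by simpa using hL0⟩⟩
    have hle : (⨆ x : Set.Iio L, Real.exp (-Real.exp (-x.1) - x.1) * (L - x.1) ^ 2)
        ≤ Real.exp (-(1 - 2/L - 2 * Real.log (L + 2/L))) := by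
      apply ciSup_le
      rintro ⟨x, hx⟩
      exact aux_bdd hL x hx
    gcongr

theorem stmt_12 :
    (∀ L : ℝ, 2 < L → ∀ x₀ : ℝ, x₀ < L →
      IsMinOn (fun x => Real.exp (-x) + x - 2 * Real.log (L - x)) (Set.Iio L) x₀ →
        (1 - 2 / L - 2 * Real.log (L + 2 / L)
            < Real.exp (-x₀) + x₀ - 2 * Real.log (L - x₀) ∧
          Real.exp (-x₀) + x₀ - 2 * Real.log (L - x₀) < 1 - 2 * Real.log L) ∧
        (⨆ x : Set.Iio L, Real.exp (-Real.exp (-x.1) - x.1) * (L - x.1) ^ 2)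
          = Real.exp (-(Real.exp (-x₀) + x₀ - 2 * Real.log (L - x₀)))) ∧
    Tendsto (fun L : ℝ =>
        (⨆ x : Set.Iio L, Real.exp (-Real.exp (-x.1) - x.1) * (L - x.1) ^ 2) / L ^ 2)
      atTop (nhds (Real.exp (-1))) := by
  exact ⟨aux_part1, aux_tendsto⟩
end

section
/- For the function τ(y) = √(1+y²) - log(1 + √(1+y²)) + (1/(4v)) log(1+y²) - ((2j-1)/v) log y on (0,∞) (with j ≥ 1 integer and v > 0), its second derivative satisfies τ''(y) ≥ j/(v y²) for all y > 0, provided 2j - 1 ≥ j (i.e. j ≥ 1). -/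
/-!
The second derivative is explicit; of its three terms, the two free of `c` have a nonnegative
sum for `v ≥ 1` because `√(1 + y²) ≤ 1 + y²`. Hence `τ'' y ≥ (2j - 1) / (v y²) ≥ j / (v y²)`.
-/

open Real Topology

/-- The paper's `τ_j` is `tau v (2 * j - 1)`. -/
noncomputable def tau (v c y : ℝ) : ℝ :=
  √(1 + y ^ 2) - log (1 + √(1 + y ^ 2)) + (1 / (4 * v)) * log (1 + y ^ 2) - (c / v) * log y

noncomputable def tauDeriv (v c y : ℝ) : ℝ :=
  y / (1 + √(1 + y ^ 2)) + y / (2 * v * (1 + y ^ 2)) - c / (v * y)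

lemma hasDerivAt_sqrt_one_add_sq (y : ℝ) :
    HasDerivAt (fun x : ℝ => √(1 + x ^ 2)) (y / √(1 + y ^ 2)) y := by
  have h := ((hasDerivAt_pow 2 y).const_add 1).sqrt (by positivity)
  convert h using 1
  field_simp
  ring

lemma hasDerivAt_div_one_add_sqrt_one_add_sq (y : ℝ) :
    HasDerivAt (fun x : ℝ => x / (1 + √(1 + x ^ 2)))
      (1 / (√(1 + y ^ 2) * (1 + √(1 + y ^ 2)))) y := by
  have hsq : √(1 + y ^ 2) ^ 2 = 1 + y ^ 2 := sq_sqrt (by positivity)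
  have h := (hasDerivAt_id' y).div ((hasDerivAt_sqrt_one_add_sq y).const_add 1) (by positivity)
  refine h.congr_deriv ?_
  field_simp
  linear_combination hsq

lemma hasDerivAt_tau (v c : ℝ) {y : ℝ} (hy : 0 < y) :
    HasDerivAt (tau v c) (tauDeriv v c y) y := by
  have h := (((hasDerivAt_sqrt_one_add_sq y).sub ((hasDerivAt_sqrt_one_add_sq y).const_add 1
    |>.log (by positivity))).add
    ((((hasDerivAt_pow 2 y).const_add 1).log (by positivity)).const_mul (1 / (4 * v)))).sub
    ((hasDerivAt_log hy.ne').const_mul (c / v))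
  refine HasDerivAt.congr_deriv (f := tau v c) h ?_
  unfold tauDeriv
  field_simp
  ring

lemma hasDerivAt_tauDeriv {v : ℝ} (hv : v ≠ 0) (c : ℝ) {y : ℝ} (hy : 0 < y) :
    HasDerivAt (tauDeriv v c)
      (1 / (√(1 + y ^ 2) * (1 + √(1 + y ^ 2))) + (1 - y ^ 2) / (2 * v * (1 + y ^ 2) ^ 2)
        + c / (v * y ^ 2)) y := by
  have h := ((hasDerivAt_div_one_add_sqrt_one_add_sq y).add ((hasDerivAt_id' y).div
      (((hasDerivAt_pow 2 y).const_add 1).const_mul (2 * v)) (by positivity))).sub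
    (((hasDerivAt_id' y).const_mul v).inv (by positivity) |>.const_mul c)
  refine HasDerivAt.congr_deriv (f := tauDeriv v c) h ?_
  field_simp
  ring

lemma deriv_deriv_tau {v : ℝ} (hv : v ≠ 0) (c : ℝ) {y : ℝ} (hy : 0 < y) :
    deriv (deriv (tau v c)) y =
      1 / (√(1 + y ^ 2) * (1 + √(1 + y ^ 2))) + (1 - y ^ 2) / (2 * v * (1 + y ^ 2) ^ 2)
        + c / (v * y ^ 2) := by
  have h : deriv (tau v c) =ᶠ[𝓝 y] tauDeriv v c := by
    filter_upwards [Ioi_mem_nhds hy] with x hx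
    exact (hasDerivAt_tau v c hx).deriv
  rw [h.deriv_eq, (hasDerivAt_tauDeriv hv c hy).deriv]

lemma one_div_sqrt_mul_add_div_nonneg {v : ℝ} (hv : 1 ≤ v) (y : ℝ) :
    0 ≤ 1 / (√(1 + y ^ 2) * (1 + √(1 + y ^ 2))) + (1 - y ^ 2) / (2 * v * (1 + y ^ 2) ^ 2) := by
  have hs1 : 1 ≤ √(1 + y ^ 2) := by simp [Real.one_le_sqrt]; positivity
  have hsq : √(1 + y ^ 2) ^ 2 = 1 + y ^ 2 := sq_sqrt (by positivity)
  have hs_le : √(1 + y ^ 2) ≤ 1 + y ^ 2 := by nlinarith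
  rw [div_add_div _ _ (by positivity) (by positivity)]
  apply div_nonneg _ (by positivity)
  nlinarith [mul_le_mul_of_nonneg_left hs_le (by positivity : (0 : ℝ) ≤ 1 + y ^ 2),
    mul_le_mul_of_nonneg_right hv (by positivity : (0 : ℝ) ≤ (1 + y ^ 2) ^ 2)]

lemma div_le_deriv_deriv_tau {v : ℝ} (hv : 1 ≤ v) (c : ℝ) {y : ℝ} (hy : 0 < y) :
    c / (v * y ^ 2) ≤ deriv (deriv (tau v c)) y := by
  rw [deriv_deriv_tau (by positivity) c hy]
  linarith [one_div_sqrt_mul_add_div_nonneg hv y]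

theorem stmt_13 (j : ℕ) (hj : 1 ≤ j) (v : ℝ) (hv : 1 ≤ v) (y : ℝ) (hy : 0 < y) :
    (j : ℝ) / (v * y ^ 2) ≤
      deriv (deriv (fun y : ℝ =>
        Real.sqrt (1 + y ^ 2) - Real.log (1 + Real.sqrt (1 + y ^ 2))
          + (1 / (4 * v)) * Real.log (1 + y ^ 2)
          - ((2 * (j : ℝ) - 1) / v) * Real.log y)) y := by
  have hj_le : (j : ℝ) ≤ 2 * j - 1 := by
    have : (1 : ℝ) ≤ j := by exact_mod_cast hj
    linarith
  calc (j : ℝ) / (v * y ^ 2) ≤ (2 * j - 1) / (v * y ^ 2) := by gcongr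
    _ ≤ deriv (deriv (tau v (2 * j - 1))) y := div_le_deriv_deriv_tau hv _ hy
end

section
/- For any two probability measures μ, ν on ℝ with finite first moments and distribution functions F_μ, F_ν, the Wasserstein-1 distance satisfies W₁(μ, ν) = ∫_{-∞}^∞ |F_μ(x) - F_ν(x)| dx. -/
open MeasureTheory ProbabilityTheory

/-- The Wasserstein-1 distance between two probability measures on `ℝ`,
defined as the infimum of `∫ |x - y| dπ` over all couplings `π`. -/
noncomputable def W1 (μ ν : Measure ℝ) : ℝ :=
  sInf { r : ℝ | ∃ π : Measure (ℝ × ℝ), IsProbabilityMeasure π ∧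
    π.map Prod.fst = μ ∧ π.map Prod.snd = ν ∧
    r = ∫ p : ℝ × ℝ, |p.1 - p.2| ∂π }

/-!
For a coupling `π`, Fubini gives `∫ |x - y| dπ = ∫ π ({x ≤ t} ∆ {y ≤ t}) dt`, and
`|F_μ t - F_ν t| = |π {x ≤ t} - π {y ≤ t}|` is at most the integrand, so no coupling costs
less than `∫ |F_μ - F_ν|`; finite first moments make every cost finite, so the bound survives
the passage to Bochner integrals. The bound is attained by the comonotone coupling
`(F_μ⁻¹ U, F_ν⁻¹ U)`, `U` uniform on `(0, 1)`: there `{x ≤ t} ∆ {y ≤ t}` is the event that `U`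
lies between `F_μ t` and `F_ν t`.
-/

open Set
open scoped symmDiff

theorem Set.Ici_symmDiff_Ici {α : Type*} [LinearOrder α] (a b : α) :
    Ici a ∆ Ici b = Ico (min a b) (max a b) := by
  ext t
  simp only [mem_symmDiff, mem_Ici, mem_Ico, min_le_iff, ← not_le, max_le_iff]
  tauto

theorem Set.Iic_symmDiff_Iic {α : Type*} [LinearOrder α] (a b : α) :
    Iic a ∆ Iic b = Ioc (min a b) (max a b) := by
  ext t
  simp only [mem_symmDiff, mem_Iic, mem_Ioc, le_max_iff, ← not_le, le_min_iff]
  tauto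

theorem Real.volume_Ici_symmDiff_Ici (a b : ℝ) :
    volume (Ici a ∆ Ici b) = ENNReal.ofReal |a - b| := by
  rw [Ici_symmDiff_Ici, Real.volume_Ico, max_sub_min_eq_abs']

theorem lintegral_abs_sub_eq_lintegral_measure_symmDiff (π : Measure (ℝ × ℝ)) [SFinite π] :
    ∫⁻ p, ENNReal.ofReal |p.1 - p.2| ∂π =
      ∫⁻ t, π ({p | p.1 ≤ t} ∆ {p | p.2 ≤ t}) := by
  set S : Set ((ℝ × ℝ) × ℝ) := {q | q.1.1 ≤ q.2} ∆ {q | q.1.2 ≤ q.2}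
  have hS : MeasurableSet S := by
    refine (measurableSet_le ?_ ?_).symmDiff (measurableSet_le ?_ ?_) <;> fun_prop
  calc ∫⁻ p, ENNReal.ofReal |p.1 - p.2| ∂π
      = ∫⁻ p, volume (Prod.mk p ⁻¹' S) ∂π := by
        simp_rw [← Real.volume_Ici_symmDiff_Ici]; rfl
    _ = (π.prod volume) S := (Measure.prod_apply hS).symm
    _ = ∫⁻ t, π ({p | p.1 ≤ t} ∆ {p | p.2 ≤ t}) := Measure.prod_apply_symm hS

theorem cdf_eq_measureReal_of_map_eq {α : Type*} [MeasurableSpace α] {π : Measure α}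
    {f : α → ℝ} (hf : Measurable f) {μ : Measure ℝ} [IsProbabilityMeasure μ]
    (h : π.map f = μ) (t : ℝ) : cdf μ t = π.real {x | f x ≤ t} := by
  rw [cdf_eq_real, ← h, map_measureReal_apply hf measurableSet_Iic]
  rfl

theorem integral_abs_cdf_sub_eq_toReal_lintegral (μ ν : Measure ℝ) :
    ∫ t, |cdf μ t - cdf ν t| = (∫⁻ t, ENNReal.ofReal |cdf μ t - cdf ν t|).toReal :=
  integral_eq_lintegral_of_nonneg_ae (ae_of_all _ fun _ => abs_nonneg _)
    ((monotone_cdf μ).measurable.sub (monotone_cdf ν).measurable).abs.aestronglyMeasurable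

theorem lintegral_abs_cdf_sub_le_lintegral_abs_sub {μ ν : Measure ℝ} [IsProbabilityMeasure μ]
    [IsProbabilityMeasure ν] {π : Measure (ℝ × ℝ)} [IsFiniteMeasure π]
    (h1 : π.map Prod.fst = μ) (h2 : π.map Prod.snd = ν) :
    ∫⁻ t, ENNReal.ofReal |cdf μ t - cdf ν t| ≤ ∫⁻ p, ENNReal.ofReal |p.1 - p.2| ∂π := by
  rw [lintegral_abs_sub_eq_lintegral_measure_symmDiff]
  refine lintegral_mono fun t => ?_
  rw [cdf_eq_measureReal_of_map_eq measurable_fst h1,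
    cdf_eq_measureReal_of_map_eq measurable_snd h2, ← ofReal_measureReal]
  gcongr
  exact abs_measureReal_sub_le_measureReal_symmDiff
    (measurableSet_le measurable_fst measurable_const).nullMeasurableSet
    (measurableSet_le measurable_snd measurable_const).nullMeasurableSet

theorem integrable_abs_sub_of_map_eq {μ ν : Measure ℝ} {π : Measure (ℝ × ℝ)}
    (hμ : Integrable (fun x => |x|) μ) (hν : Integrable (fun x => |x|) ν)
    (h1 : π.map Prod.fst = μ) (h2 : π.map Prod.snd = ν) :
    Integrable (fun p : ℝ × ℝ => |p.1 - p.2|) π := by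
  subst h1 h2
  have hfst := (integrable_map_measure (by fun_prop) (by fun_prop)).mp hμ
  have hsnd := (integrable_map_measure (by fun_prop) (by fun_prop)).mp hν
  refine (hfst.add hsnd).mono' (by fun_prop) (ae_of_all _ fun p => ?_)
  rw [Real.norm_eq_abs, abs_abs]
  exact abs_sub _ _

theorem integral_abs_cdf_sub_le_integral_abs_sub {μ ν : Measure ℝ} [IsProbabilityMeasure μ]
    [IsProbabilityMeasure ν] {π : Measure (ℝ × ℝ)} [IsFiniteMeasure π]
    (hμ : Integrable (fun x => |x|) μ) (hν : Integrable (fun x => |x|) ν)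
    (h1 : π.map Prod.fst = μ) (h2 : π.map Prod.snd = ν) :
    ∫ t, |cdf μ t - cdf ν t| ≤ ∫ p, |p.1 - p.2| ∂π := by
  rw [integral_abs_cdf_sub_eq_toReal_lintegral,
    integral_eq_lintegral_of_nonneg_ae (ae_of_all _ fun _ => abs_nonneg _) (by fun_prop)]
  exact ENNReal.toReal_mono (integrable_abs_sub_of_map_eq hμ hν h1 h2).lintegral_lt_top.ne
    (lintegral_abs_cdf_sub_le_lintegral_abs_sub h1 h2)

/-- Meaningful only on `(0, 1)`: below `0` the set is not bounded below, above `1` it can be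
empty, and `sInf` returns `0` in both cases. -/
noncomputable def quantile (μ : Measure ℝ) (u : ℝ) : ℝ := sInf {x | u ≤ cdf μ x}

section Quantile

variable (μ : Measure ℝ) {u : ℝ}

theorem nonempty_setOf_le_cdf (hu : u < 1) : {x | u ≤ cdf μ x}.Nonempty :=
  ((tendsto_cdf_atTop μ).eventually_const_le hu).exists

theorem bddBelow_setOf_le_cdf (hu : 0 < u) : BddBelow {x | u ≤ cdf μ x} := by
  obtain ⟨y, hy⟩ := ((tendsto_cdf_atBot μ).eventually_lt_const hu).exists
  refine ⟨y, fun z hz => le_of_lt ?_⟩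
  by_contra! hzy
  exact (hz.trans (monotone_cdf μ hzy)).not_gt hy

theorem quantile_le_iff (hu : u ∈ Ioo 0 1) {x : ℝ} : quantile μ u ≤ x ↔ u ≤ cdf μ x := by
  refine ⟨fun h => ?_, fun h => csInf_le (bddBelow_setOf_le_cdf μ hu.1) h⟩
  have hgt : ∀ z, x < z → u ≤ cdf μ z := fun z hz => by
    obtain ⟨s, hs, hsz⟩ := exists_lt_of_csInf_lt (nonempty_setOf_le_cdf μ hu.2) (h.trans_lt hz)
    exact hs.trans (monotone_cdf μ hsz.le)
  have hright := (cdf μ).right_continuous x |>.mono_left (nhdsWithin_mono x Ioi_subset_Ici_self)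
  exact ge_of_tendsto hright (eventually_mem_nhdsWithin.mono hgt)

theorem monotoneOn_quantile : MonotoneOn (quantile μ) (Ioo 0 1) := fun _ hu _ hv huv =>
  csInf_le_csInf (bddBelow_setOf_le_cdf μ hu.1) (nonempty_setOf_le_cdf μ hv.2)
    fun _ hx => huv.trans hx

theorem aemeasurable_quantile : AEMeasurable (quantile μ) (volume.restrict (Ioo 0 1)) :=
  aemeasurable_restrict_of_monotoneOn measurableSet_Ioo (monotoneOn_quantile μ)

theorem preimage_quantile_Iic_inter_Ioo (x : ℝ) :
    quantile μ ⁻¹' Iic x ∩ Ioo 0 1 = Iic (cdf μ x) ∩ Ioo 0 1 := by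
  ext u
  simp only [mem_inter_iff, mem_preimage, mem_Iic]
  exact and_congr_left fun hu => quantile_le_iff μ hu

end Quantile

theorem volume_restrict_Ioo_zero_one_Ioc {a b : ℝ} (ha : 0 ≤ a) (hb : b ≤ 1) :
    volume.restrict (Ioo 0 1) (Ioc a b) = ENNReal.ofReal (b - a) := by
  rw [Measure.restrict_apply measurableSet_Ioc]
  refine le_antisymm ((measure_mono inter_subset_left).trans_eq Real.volume_Ioc) ?_
  rw [← Real.volume_Ioo]
  exact measure_mono fun u hu => ⟨Ioo_subset_Ioc_self hu, ha.trans_lt hu.1, hu.2.trans_le hb⟩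

instance isProbabilityMeasure_restrict_Ioo_zero_one :
    IsProbabilityMeasure (volume.restrict (Ioo (0 : ℝ) 1)) :=
  ⟨by simp [Real.volume_Ioo]⟩

theorem volume_restrict_Ioo_zero_one_Iic {c : ℝ} (hc : c ≤ 1) :
    volume.restrict (Ioo 0 1) (Iic c) = ENNReal.ofReal c := by
  have h : Iic c ∩ Ioo 0 1 = Ioc 0 c ∩ Ioo 0 1 := by
    ext u
    simp only [mem_inter_iff, mem_Iic, mem_Ioc, mem_Ioo]
    tauto
  rw [Measure.restrict_apply measurableSet_Iic, h, ← Measure.restrict_apply measurableSet_Ioc,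
    volume_restrict_Ioo_zero_one_Ioc le_rfl hc, sub_zero]

theorem map_quantile_volume_restrict_Ioo (μ : Measure ℝ) [IsProbabilityMeasure μ] :
    (volume.restrict (Ioo 0 1)).map (quantile μ) = μ := by
  refine Measure.ext_of_Iic _ _ fun x => ?_
  rw [Measure.map_apply_of_aemeasurable (aemeasurable_quantile μ) measurableSet_Iic,
    Measure.restrict_apply' measurableSet_Ioo, preimage_quantile_Iic_inter_Ioo,
    ← Measure.restrict_apply' measurableSet_Ioo,
    volume_restrict_Ioo_zero_one_Iic (cdf_le_one μ x), ofReal_cdf]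

theorem lintegral_abs_sub_map_quantile (μ ν : Measure ℝ) :
    ∫⁻ p, ENNReal.ofReal |p.1 - p.2|
        ∂(volume.restrict (Ioo 0 1)).map (fun u => (quantile μ u, quantile ν u))
      = ∫⁻ t, ENNReal.ofReal |cdf μ t - cdf ν t| := by
  rw [lintegral_abs_sub_eq_lintegral_measure_symmDiff]
  refine lintegral_congr fun t => ?_
  have hpair := (aemeasurable_quantile μ).prodMk (aemeasurable_quantile ν)
  have hS : MeasurableSet ({p : ℝ × ℝ | p.1 ≤ t} ∆ {p | p.2 ≤ t}) :=
    (measurableSet_le measurable_fst measurable_const).symmDiff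
      (measurableSet_le measurable_snd measurable_const)
  calc _ = volume ((quantile μ ⁻¹' Iic t) ∆ (quantile ν ⁻¹' Iic t) ∩ Ioo 0 1) := by
        rw [Measure.map_apply_of_aemeasurable hpair hS, Measure.restrict_apply' measurableSet_Ioo]
        rfl
    _ = volume.restrict (Ioo 0 1) (Iic (cdf μ t) ∆ Iic (cdf ν t)) := by
        rw [inter_symmDiff_distrib_right, preimage_quantile_Iic_inter_Ioo,
          preimage_quantile_Iic_inter_Ioo, ← inter_symmDiff_distrib_right,
          Measure.restrict_apply' measurableSet_Ioo]
    _ = ENNReal.ofReal |cdf μ t - cdf ν t| := by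
        rw [Iic_symmDiff_Iic, volume_restrict_Ioo_zero_one_Ioc
          (le_min (cdf_nonneg μ t) (cdf_nonneg ν t)) (max_le (cdf_le_one μ t) (cdf_le_one ν t)),
          max_sub_min_eq_abs']

theorem exists_coupling_integral_abs_sub_eq (μ ν : Measure ℝ) [IsProbabilityMeasure μ]
    [IsProbabilityMeasure ν] :
    ∃ π : Measure (ℝ × ℝ), IsProbabilityMeasure π ∧ π.map Prod.fst = μ ∧ π.map Prod.snd = ν ∧
      ∫ p, |p.1 - p.2| ∂π = ∫ t, |cdf μ t - cdf ν t| := by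
  have hpair := (aemeasurable_quantile μ).prodMk (aemeasurable_quantile ν)
  refine ⟨_, Measure.isProbabilityMeasure_map hpair, ?_, ?_, ?_⟩
  · rw [AEMeasurable.map_map_of_aemeasurable measurable_fst.aemeasurable hpair]
    exact map_quantile_volume_restrict_Ioo μ
  · rw [AEMeasurable.map_map_of_aemeasurable measurable_snd.aemeasurable hpair]
    exact map_quantile_volume_restrict_Ioo ν
  · rw [integral_eq_lintegral_of_nonneg_ae (ae_of_all _ fun _ => abs_nonneg _) (by fun_prop),
      lintegral_abs_sub_map_quantile, integral_abs_cdf_sub_eq_toReal_lintegral]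

theorem stmt_16 (μ ν : Measure ℝ) [IsProbabilityMeasure μ] [IsProbabilityMeasure ν]
    (hμ : Integrable (fun x => |x|) μ) (hν : Integrable (fun x => |x|) ν) :
    W1 μ ν = ∫ x : ℝ, |cdf μ x - cdf ν x| := by
  obtain ⟨π, hπ, h1, h2, hcost⟩ := exists_coupling_integral_abs_sub_eq μ ν
  refine IsLeast.csInf_eq ⟨⟨π, hπ, h1, h2, hcost.symm⟩, ?_⟩
  rintro _ ⟨π', hπ', h1', h2', rfl⟩
  exact integral_abs_cdf_sub_le_integral_abs_sub hμ hν h1' h2'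
end
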